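/- Canonical data determines the language from above: let t and t₁ be solvable tuple patterns of the same arity n, and let M^t be canonical data for t. If M^t ⊨ t₁, then L(t) ⊆ L(t₁). -/

import Mathlib

namespace STPaper

variable {A V : Type}

/-- A word over the alphabet `A`. -/
abbrev Word (A : Type) := List A

/-- A pattern: a finite word over `A ⊕ V` (letters and variables). -/
abbrev Pat (A V : Type) := List (A ⊕ V)

/-- A tuple pattern: a finite tuple of patterns. -/
abbrev TP (A V : Type) := List (Pat A V)

/-- A column of learning data: one word per row. -/
abbrev Col (A : Type) := List (Word A)

/-- Learning data, represented as its list of columns. -/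
abbrev Data (A : Type) := List (Col A)

/-- A data-substitution `[M/x⃗]`: the number `m` of rows together with the list pairing each
variable of `x⃗` with the corresponding column of `M`. -/
structure DSub (A V : Type) where
  m : ℕ
  entries : List (V × Col A)

/-- Apply a word-valued substitution to a pattern. -/
def substPatW (θ : V → Word A) (p : Pat A V) : Word A :=
  (p.map (Sum.elim (fun a => [a]) θ)).flatten

/-- Look up the column assigned to a variable by a data-substitution (default: all-ε). -/
def lookupCol [DecidableEq V] (E : List (V × Col A)) (x : V) : Col A :=
  match E.find? (fun e => decide (e.1 = x)) with
  | some e => e.2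
  | none => []

/-- The substitution corresponding to the `i`-th row of a data-substitution. -/
def DSub.rowSub [DecidableEq V] (Θ : DSub A V) (i : ℕ) : V → Word A :=
  fun x => (lookupCol Θ.entries x).getD i []

/-- `Θ.apply t` : the matrix `Θt` (as a list of columns, each of length `Θ.m`). -/
def DSub.apply [DecidableEq V] (Θ : DSub A V) (t : TP A V) : Data A :=
  t.map (fun p => (List.range Θ.m).map (fun i => substPatW (Θ.rowSub i) p))

/-- Well-formedness of a data-substitution: pairwise-distinct variables and
all columns of length `m`. -/
def DSub.WF (Θ : DSub A V) : Prop :=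
  (Θ.entries.map Prod.fst).Nodup ∧ ∀ e ∈ Θ.entries, e.2.length = Θ.m

/-- The free variables of a tuple pattern. -/
def fvTP (t : TP A V) : Set V := {x | Sum.inr x ∈ t.flatten}

/-- Substitution of a single pattern `q` for the variable `x` in a pattern. -/
def substVar [DecidableEq A] [DecidableEq V] (x : V) (q : Pat A V) (p : Pat A V) : Pat A V :=
  (p.map (fun s => if s = Sum.inr x then q else [s])).flatten

/-- Substitution of a single pattern `q` for the variable `x` in a tuple pattern. -/
def substVarTP [DecidableEq A] [DecidableEq V] (x : V) (q : Pat A V) (t : TP A V) : TP A V :=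
  t.map (substVar x q)

/-- Simultaneous substitution `[qs/xs]p` of the patterns `qs` for the variables `xs`. -/
def substVars [DecidableEq V] (xs : List V) (qs : List (Pat A V)) (p : Pat A V) : Pat A V :=
  (p.map (fun s =>
    match s with
    | Sum.inl a => [Sum.inl a]
    | Sum.inr x =>
      match (xs.zip qs).find? (fun e => decide (e.1 = x)) with
      | some e => e.2
      | none => [Sum.inr x])).flatten

/-- Simultaneous substitution `[qs/xs]t` on a tuple pattern. -/
def substVarsTP [DecidableEq V] (xs : List V) (qs : List (Pat A V)) (t : TP A V) : TP A V :=
  t.map (substVars xs qs)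

/-- A column is the all-ε column. -/
def allEps (c : Col A) : Prop := ∀ w ∈ c, w = []

/-- The trivial tuple pattern `(x₁, …, xₙ)`. -/
def trivTP (xs : List V) : TP A V := xs.map (fun x => [Sum.inr x])

section
variable [DecidableEq A] [DecidableEq V]

/-- The rewriting relation ⟶ on pairs of a tuple pattern and a data-substitution. -/
inductive Step : (TP A V × DSub A V) → (TP A V × DSub A V) → Prop
  | pre (t : TP A V) (m : ℕ) (E : List (V × Col A)) (i j : ℕ)
      (hi : i < E.length) (hj : j < E.length) (hij : i ≠ j)
      (s : Col A) (hslen : s.length = (E[i]'hi).2.length)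
      (hpre : (E[j]'hj).2 = List.zipWith (· ++ ·) (E[i]'hi).2 s)
      (hne : ¬ allEps (E[i]'hi).2)
      (x' : V) (hx1 : x' ∉ E.map Prod.fst) (hx2 : Sum.inr x' ∉ t.flatten) :
      Step (t, ⟨m, E⟩)
        (substVarTP (E[j]'hj).1 [Sum.inr (E[i]'hi).1, Sum.inr x'] t,
         ⟨m, E.set j (x', s)⟩)
  | cpre (t : TP A V) (m : ℕ) (E : List (V × Col A)) (j : ℕ)
      (hj : j < E.length) (a : A) (s : Col A)
      (hpre : (E[j]'hj).2 = s.map (fun w => a :: w))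
      (x' : V) (hx1 : x' ∉ E.map Prod.fst) (hx2 : Sum.inr x' ∉ t.flatten) :
      Step (t, ⟨m, E⟩)
        (substVarTP (E[j]'hj).1 [Sum.inl a, Sum.inr x'] t, ⟨m, E.set j (x', s)⟩)
  | eps (t : TP A V) (m : ℕ) (E : List (V × Col A)) (j : ℕ)
      (hj : j < E.length) (heps : allEps (E[j]'hj).2) :
      Step (t, ⟨m, E⟩) (substVarTP (E[j]'hj).1 [] t, ⟨m, E.eraseIdx j⟩)

/-- `n`-step rewriting. -/
def StepN : ℕ → (TP A V × DSub A V) → (TP A V × DSub A V) → Prop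
  | 0 => fun c₁ c₂ => c₁ = c₂
  | n + 1 => fun c₁ c₃ => ∃ c₂, Step c₁ c₂ ∧ StepN n c₂ c₃

end

/-- The reduction relation ⇒ on tuple patterns. -/
inductive PStep : TP A V → TP A V → Prop
  | pre (t : TP A V) (i j : ℕ) (hi : i < t.length) (hj : j < t.length)
      (hij : i ≠ j) (p' : Pat A V)
      (hdec : t[j]'hj = (t[i]'hi) ++ p') (hne : t[i]'hi ≠ []) :
      PStep t (t.set j p')
  | cpre (t : TP A V) (j : ℕ) (hj : j < t.length) (a : A) (p' : Pat A V)
      (hdec : t[j]'hj = Sum.inl a :: p') :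
      PStep t (t.set j p')
  | eps (t : TP A V) (j : ℕ) (hj : j < t.length) (heps : t[j]'hj = []) :
      PStep t (t.eraseIdx j)

/-- A tuple pattern is solvable if it reduces to a trivial tuple of pairwise
distinct variables. -/
def Solvable (t : TP A V) : Prop :=
  ∃ ys : List V, ys.Nodup ∧ Relation.ReflTransGen PStep t (trivTP ys)

/-- The language of a tuple pattern. -/
def lang (t : TP A V) : Set (List (Word A)) :=
  {w | ∃ θ : V → Word A, w = t.map (substPatW θ)}

/-- `M ⊨ t` : there is a data-substitution `Θ` (with `rows` rows) with `Θt = M`. -/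
def Models [DecidableEq V] (M : Data A) (rows : ℕ) (t : TP A V) : Prop :=
  ∃ Θ : DSub A V, Θ.m = rows ∧ Θ.WF ∧ Θ.apply t = M

/-- `M ⊨ₛ t` : additionally, no variable of `t` is mapped to ε in every row. -/
def SModels [DecidableEq V] (M : Data A) (rows : ℕ) (t : TP A V) : Prop :=
  ∃ Θ : DSub A V, Θ.m = rows ∧ Θ.WF ∧ Θ.apply t = M ∧
    ∀ x ∈ fvTP t, ¬ allEps (lookupCol Θ.entries x)

/-- Renaming the variables of a tuple pattern. -/
def renameTP (ρ : V → V) (t : TP A V) : TP A V :=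
  t.map (List.map (Sum.map id ρ))

/-- The measure `#t` of a tuple pattern. -/
def tpMeasure (t : TP A V) : ℕ := (t.map List.length).sum + t.length

/-- `size(M)`. -/
def dataSize (M : Data A) : ℕ :=
  (M.map (fun c => (c.map (fun w => w.length + 1)).sum)).sum

/-- Learning data (as columns) whose rows enumerate the given list of tuples. -/
def colsOfRows (n : ℕ) (rows : List (List (Word A))) : Data A :=
  (List.range n).map (fun j => rows.map (fun r => r.getD j []))

/-- `m ⊨ₛ t` for a (possibly infinite) set of tuples of words. -/
def SetSModels (S : Set (List (Word A))) (t : TP A V) : Prop :=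
  ∃ θ : S → V → Word A,
    (∀ v : S, (v : List (Word A)) = t.map (substPatW (θ v))) ∧
    ∀ x ∈ fvTP t, ∃ v : S, θ v x ≠ []

/-- A rule instance of the ⇒ relation. -/
inductive RuleInst (A V : Type) where
  | pre (i j : ℕ)
  | cpre (j : ℕ) (a : A)
  | eps (j : ℕ)

/-- The reduction step derived by a given rule instance. -/
def RuleStep : RuleInst A V → TP A V → TP A V → Prop
  | .pre i j, t, t' => ∃ (hi : i < t.length) (hj : j < t.length),
      i ≠ j ∧ t[i]'hi ≠ [] ∧ ∃ p', t[j]'hj = (t[i]'hi) ++ p' ∧ t' = t.set j p'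
  | .cpre j a, t, t' => ∃ (_ : j < t.length) (p' : Pat A V),
      t.getD j [] = Sum.inl a :: p' ∧ t' = t.set j p'
  | .eps j, t, t' => ∃ (_ : j < t.length), t.getD j [] = ([] : Pat A V) ∧ t' = t.eraseIdx j

/-- Well-definedness of the residual of a tuple pattern along a rule instance. -/
def ResDefined : RuleInst A V → TP A V → Prop
  | .pre i j, t => i < t.length ∧ j < t.length ∧ (t.getD i []) <+: (t.getD j [])
  | .cpre j a, t => j < t.length ∧ ∃ p', t.getD j [] = Sum.inl a :: p'
  | .eps j, t => j < t.length ∧ t.getD j [] = ([] : Pat A V)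

/-- The residual of a tuple pattern along a rule instance. -/
def residual : RuleInst A V → TP A V → TP A V
  | .pre i j, t => t.set j ((t.getD j []).drop (t.getD i []).length)
  | .cpre j _, t => t.set j ((t.getD j []).drop 1)
  | .eps j, t => t.eraseIdx j

/-- The reduction relation ⇒ extended with the postfix rules. -/
inductive PStepX : TP A V → TP A V → Prop
  | pre (t : TP A V) (i j : ℕ) (hi : i < t.length) (hj : j < t.length)
      (hij : i ≠ j) (p' : Pat A V)
      (hdec : t[j]'hj = (t[i]'hi) ++ p') (hne : t[i]'hi ≠ []) :
      PStepX t (t.set j p')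
  | cpre (t : TP A V) (j : ℕ) (hj : j < t.length) (a : A) (p' : Pat A V)
      (hdec : t[j]'hj = Sum.inl a :: p') :
      PStepX t (t.set j p')
  | eps (t : TP A V) (j : ℕ) (hj : j < t.length) (heps : t[j]'hj = []) :
      PStepX t (t.eraseIdx j)
  | post (t : TP A V) (i j : ℕ) (hi : i < t.length) (hj : j < t.length)
      (hij : i ≠ j) (p' : Pat A V)
      (hdec : t[j]'hj = p' ++ (t[i]'hi)) (hne : t[i]'hi ≠ []) :
      PStepX t (t.set j p')
  | cpost (t : TP A V) (j : ℕ) (hj : j < t.length) (a : A) (p' : Pat A V)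
      (hdec : t[j]'hj = p' ++ [Sum.inl a]) :
      PStepX t (t.set j p')


section CanonicalAux

/-- Decoding triples: `(u, v, w)` factors into letter blocks `(c, c, c)` and
variable blocks `(θα x, θβ x, θ x)` for `x ∈ F`. -/
inductive Good (F : Set V) (θα θβ θ : V → Word A) : Word A → Word A → Word A → Prop
  | nil : Good F θα θβ θ [] [] []
  | letter (c : A) {u v w : Word A} : Good F θα θβ θ u v w →
      Good F θα θβ θ (c :: u) (c :: v) (c :: w)
  | var {x : V} (hx : x ∈ F) {u v w : Word A} : Good F θα θβ θ u v w →
      Good F θα θβ θ (θα x ++ u) (θβ x ++ v) (θ x ++ w)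

theorem Good.append {F : Set V} {θα θβ θ : V → Word A} {u v w u' v' w' : Word A}
    (h : Good F θα θβ θ u v w) (h' : Good F θα θβ θ u' v' w') :
    Good F θα θβ θ (u ++ u') (v ++ v') (w ++ w') := by
  induction h with
  | nil => simpa using h'
  | letter c _ ih => simpa using Good.letter c ih
  | var hx _ ih => simpa [List.append_assoc] using Good.var hx ih

variable {F : Set V} {θα θβ θ : V → Word A}

/-- Uniqueness of decoding. -/
theorem Good.uniq
    (Hhead : ∀ x ∈ F, ∃ c d rα rβ, θα x = c :: rα ∧ θβ x = d :: rβ ∧ c ≠ d)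
    (Hcode : ∀ x ∈ F, ∀ y ∈ F, x ≠ y → ¬ (θα x <+: θα y))
    {u v w : Word A} (h : Good F θα θβ θ u v w) :
    ∀ {u' v' w' : Word A}, Good F θα θβ θ u' v' w' → u = u' → v = v' → w = w' := by
  induction h with
  | nil =>
    intro u' v' w' h2 hu hv
    cases h2 with
    | nil => rfl
    | letter c h2 => simp at hu
    | var hy h2 =>
      obtain ⟨c, d, rα, rβ, hα, hβ, hcd⟩ := Hhead _ hy
      rw [hα] at hu; simp at hu
  | letter c h1 ih =>
    intro u' v' w' h2 hu hv
    cases h2 with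
    | nil => simp at hu
    | letter c' h2 =>
      rw [List.cons.injEq] at hu hv
      obtain ⟨rfl, hu⟩ := hu
      obtain ⟨-, hv⟩ := hv
      rw [ih h2 hu hv]
    | var hy h2 =>
      obtain ⟨cy, dy, rα, rβ, hα, hβ, hcd⟩ := Hhead _ hy
      rw [hα] at hu; rw [hβ] at hv
      simp only [List.cons_append, List.cons.injEq] at hu hv
      exact absurd (hu.1.symm.trans hv.1) hcd
  | @var x hx u v w h1 ih =>
    intro u' v' w' h2 hu hv
    obtain ⟨cx, dx, rα, rβ, hα, hβ, hcd⟩ := Hhead _ hx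
    cases h2 with
    | nil => rw [hα] at hu; simp at hu
    | letter c h2 =>
      rw [hα] at hu; rw [hβ] at hv
      simp only [List.cons_append, List.cons.injEq] at hu hv
      exact absurd (hu.1.trans hv.1.symm) hcd
    | @var y hy u₂ v₂ w₂ h2 =>
      have hco : θα x <+: θα y ∨ θα y <+: θα x := by
        have h1p : θα x <+: θα y ++ u₂ := by
          rw [← hu]; exact List.prefix_append _ _
        exact List.prefix_or_prefix_of_prefix h1p (List.prefix_append _ _)
      have hxy : x = y := by
        by_contra hne
        rcases hco with hp | hp
        · exact Hcode x hx y hy hne hp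
        · exact Hcode y hy x hx (Ne.symm hne) hp
      subst hxy
      rw [ih h2 (List.append_cancel_left hu) (List.append_cancel_left hv)]

/-- Left cancellation of decodable prefixes. -/
theorem Good.cancel
    (Hhead : ∀ x ∈ F, ∃ c d rα rβ, θα x = c :: rα ∧ θβ x = d :: rβ ∧ c ≠ d)
    (Hcode : ∀ x ∈ F, ∀ y ∈ F, x ≠ y → ¬ (θα x <+: θα y))
    {u v w : Word A} (h : Good F θα θβ θ u v w) :
    ∀ {U V' W u' v' : Word A}, Good F θα θβ θ U V' W → U = u ++ u' → V' = v ++ v' →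
      ∃ w', Good F θα θβ θ u' v' w' := by
  induction h with
  | nil =>
    intro U V' W u' v' h2 hU hV
    simp only [List.nil_append] at hU hV
    subst hU; subst hV
    exact ⟨W, h2⟩
  | letter c h1 ih =>
    intro U V' W u' v' h2 hU hV
    cases h2 with
    | nil => simp at hU
    | letter c' h2 =>
      rw [List.cons_append, List.cons.injEq] at hU hV
      exact ih h2 hU.2 hV.2
    | var hy h2 =>
      obtain ⟨cy, dy, rα, rβ, hα, hβ, hcd⟩ := Hhead _ hy
      rw [hα] at hU; rw [hβ] at hV
      simp only [List.cons_append, List.cons.injEq] at hU hV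
      exact absurd (hU.1.trans hV.1.symm) hcd
  | @var x hx u v w h1 ih =>
    intro U V' W u' v' h2 hU hV
    obtain ⟨cx, dx, rα, rβ, hα, hβ, hcd⟩ := Hhead _ hx
    cases h2 with
    | nil => rw [hα] at hU; simp at hU
    | letter c h2 =>
      rw [hα] at hU; rw [hβ] at hV
      simp only [List.cons_append, List.append_assoc, List.cons.injEq] at hU hV
      exact absurd (hU.1.symm.trans hV.1) hcd
    | @var y hy u₂ v₂ w₂ h2 =>
      have hco : θα x <+: θα y ∨ θα y <+: θα x := by
        have h1p : θα x <+: θα y ++ u₂ := by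
          rw [hU, List.append_assoc]; exact List.prefix_append _ _
        exact List.prefix_or_prefix_of_prefix h1p (List.prefix_append _ _)
      have hxy : y = x := by
        by_contra hne
        rcases hco with hp | hp
        · exact Hcode x hx y hy (Ne.symm hne) hp
        · exact Hcode y hy x hx hne hp
      subst hxy
      rw [List.append_assoc] at hU hV
      exact ih h2 (List.append_cancel_left hU) (List.append_cancel_left hV)

theorem substPatW_nil (θ' : V → Word A) : substPatW θ' ([] : Pat A V) = [] := rfl

theorem substPatW_cons_inl (θ' : V → Word A) (c : A) (p : Pat A V) :
    substPatW θ' (Sum.inl c :: p) = c :: substPatW θ' p := rfl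

theorem substPatW_cons_inr (θ' : V → Word A) (y : V) (p : Pat A V) :
    substPatW θ' (Sum.inr y :: p) = θ' y ++ substPatW θ' p := rfl

theorem substPatW_append (θ' : V → Word A) (p q : Pat A V) :
    substPatW θ' (p ++ q) = substPatW θ' p ++ substPatW θ' q := by
  simp [substPatW]

theorem good_sub {σ₀ σ₁ θw : V → Word A} (q : Pat A V)
    (Hv : ∀ y, Sum.inr y ∈ q → Good F θα θβ θ (σ₀ y) (σ₁ y) (θw y)) :
    Good F θα θβ θ (substPatW σ₀ q) (substPatW σ₁ q) (substPatW θw q) := by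
  induction q with
  | nil => exact Good.nil
  | cons s q ih =>
    have ih' := ih (fun y hy => Hv y (List.mem_cons_of_mem _ hy))
    cases s with
    | inl c =>
      rw [substPatW_cons_inl, substPatW_cons_inl, substPatW_cons_inl]
      exact Good.letter c ih'
    | inr y =>
      rw [substPatW_cons_inr, substPatW_cons_inr, substPatW_cons_inr]
      exact (Hv y (List.mem_cons_self)).append ih'

theorem good_pat (p : Pat A V) (hp : ∀ y, Sum.inr y ∈ p → y ∈ F) :
    Good F θα θβ θ (substPatW θα p) (substPatW θβ p) (substPatW θ p) :=
  good_sub p (fun y hy => by simpa using Good.var (hp y hy) Good.nil)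

/-- The per-component decodability invariant is preserved by `PStep`. -/
theorem inv_pstep {σ₀ σ₁ : V → Word A}
    (Hhead : ∀ x ∈ F, ∃ c d rα rβ, θα x = c :: rα ∧ θβ x = d :: rβ ∧ c ≠ d)
    (Hcode : ∀ x ∈ F, ∀ y ∈ F, x ≠ y → ¬ (θα x <+: θα y))
    {t' t'' : TP A V} (h : PStep t' t'')
    (hI : ∀ q ∈ t', ∃ w, Good F θα θβ θ (substPatW σ₀ q) (substPatW σ₁ q) w) :
    ∀ q ∈ t'', ∃ w, Good F θα θβ θ (substPatW σ₀ q) (substPatW σ₁ q) w := by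
  cases h with
  | pre i j hi hj hij p' hdec hne =>
    intro q hq
    rcases List.mem_or_eq_of_mem_set hq with hq | rfl
    · exact hI q hq
    · obtain ⟨W, hW⟩ := hI _ (List.getElem_mem hj)
      obtain ⟨wi, hwi⟩ := hI _ (List.getElem_mem hi)
      rw [hdec, substPatW_append, substPatW_append] at hW
      exact Good.cancel Hhead Hcode hwi hW rfl rfl
  | cpre j hj a p' hdec =>
    intro q hq
    rcases List.mem_or_eq_of_mem_set hq with hq | rfl
    · exact hI q hq
    · obtain ⟨W, hW⟩ := hI _ (List.getElem_mem hj)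
      rw [hdec, substPatW_cons_inl, substPatW_cons_inl] at hW
      exact Good.cancel Hhead Hcode (Good.letter a Good.nil) hW rfl rfl
  | eps j hj heps =>
    intro q hq
    exact hI q (List.mem_of_mem_eraseIdx hq)

theorem inv_rtc {σ₀ σ₁ : V → Word A}
    (Hhead : ∀ x ∈ F, ∃ c d rα rβ, θα x = c :: rα ∧ θβ x = d :: rβ ∧ c ≠ d)
    (Hcode : ∀ x ∈ F, ∀ y ∈ F, x ≠ y → ¬ (θα x <+: θα y))
    {t' t'' : TP A V} (h : Relation.ReflTransGen PStep t' t'')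
    (hI : ∀ q ∈ t', ∃ w, Good F θα θβ θ (substPatW σ₀ q) (substPatW σ₁ q) w) :
    ∀ q ∈ t'', ∃ w, Good F θα θβ θ (substPatW σ₀ q) (substPatW σ₁ q) w := by
  induction h with
  | refl => exact hI
  | tail _ hstep ih => exact inv_pstep Hhead Hcode hstep ih

/-- `PStep` does not lose free variables. -/
theorem fv_pstep {t' t'' : TP A V} (h : PStep t' t'') : fvTP t' ⊆ fvTP t'' := by
  cases h with
  | pre i j hi hj hij p' hdec hne =>
    intro x hx
    simp only [fvTP, Set.mem_setOf_eq, List.mem_flatten] at hx ⊢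
    obtain ⟨q, hq, hxq⟩ := hx
    obtain ⟨k, hk, hkq⟩ := List.getElem_of_mem hq
    by_cases hkj : k = j
    · subst hkj
      have hq2 : q = (t'[i]'hi) ++ p' := by rw [← hkq]; exact hdec
      rcases List.mem_append.1 (hq2 ▸ hxq) with hxi | hxp
      · refine ⟨t'[i]'hi, ?_, hxi⟩
        have hmem := List.getElem_mem (l := t'.set k p') (n := i) (by simpa using hi)
        rwa [List.getElem_set_ne (fun hh => hij hh.symm)] at hmem
      · refine ⟨p', ?_, hxp⟩
        have hmem := List.getElem_mem (l := t'.set k p') (n := k) (by simpa using hk)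
        rwa [List.getElem_set_self] at hmem
    · refine ⟨q, ?_, hxq⟩
      have hmem := List.getElem_mem (l := t'.set j p') (n := k) (by simpa using hk)
      rwa [List.getElem_set_ne (fun hh => hkj hh.symm), hkq] at hmem
  | cpre j hj a p' hdec =>
    intro x hx
    simp only [fvTP, Set.mem_setOf_eq, List.mem_flatten] at hx ⊢
    obtain ⟨q, hq, hxq⟩ := hx
    obtain ⟨k, hk, hkq⟩ := List.getElem_of_mem hq
    by_cases hkj : k = j
    · subst hkj
      have hq2 : q = Sum.inl a :: p' := by rw [← hkq]; exact hdec
      rw [hq2] at hxq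
      rcases List.mem_cons.1 hxq with hxa | hxp
      · exact absurd hxa (by simp)
      · refine ⟨p', ?_, hxp⟩
        have hmem := List.getElem_mem (l := t'.set k p') (n := k) (by simpa using hk)
        rwa [List.getElem_set_self] at hmem
    · refine ⟨q, ?_, hxq⟩
      have hmem := List.getElem_mem (l := t'.set j p') (n := k) (by simpa using hk)
      rwa [List.getElem_set_ne (fun hh => hkj hh.symm), hkq] at hmem
  | eps j hj heps =>
    intro x hx
    simp only [fvTP, Set.mem_setOf_eq] at hx ⊢
    have hflat : (t'.eraseIdx j).flatten = t'.flatten := by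
      conv_rhs => rw [← List.take_append_drop j t', List.drop_eq_getElem_cons hj, heps]
      rw [List.eraseIdx_eq_take_drop_succ]
      simp
    rwa [hflat]

theorem fv_rtc {t' t'' : TP A V} (h : Relation.ReflTransGen PStep t' t'') :
    fvTP t' ⊆ fvTP t'' := by
  induction h with
  | refl => exact subset_rfl
  | tail _ hstep ih => exact ih.trans (fv_pstep hstep)

theorem fv_triv (ys : List V) : fvTP (trivTP ys : TP A V) ⊆ {y | y ∈ ys} := by
  intro x hx
  simp only [fvTP, trivTP, Set.mem_setOf_eq, List.mem_flatten, List.mem_map] at hx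
  obtain ⟨q, ⟨y, hy, rfl⟩, hxq⟩ := hx
  simp only [List.mem_singleton, Sum.inr.injEq] at hxq
  subst hxq
  exact hy

end CanonicalAux

/-- **Canonical data determines the language from above.**
Let `t` and `t₁` be solvable tuple patterns of the same arity, and let `Mᵗ` be canonical
data for `t`: its two rows are obtained by substituting, for the variables of `t`,
nonempty words `αᵢ` over `{a,b}` forming a prefix code, resp. the words `βᵢ` obtained
from `αᵢ` by swapping `a` and `b`. If `Mᵗ ⊨ t₁`, then `L(t) ⊆ L(t₁)`. -/
theorem canonical_data
    [DecidableEq A] [DecidableEq V] [Nontrivial A] [Countable V] [Infinite V]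
    (a b : A) (hab : a ≠ b)
    (t t₁ : TP A V) (hsolv : Solvable t) (hsolv₁ : Solvable t₁)
    (θα : V → Word A)
    (hnonempty : ∀ x ∈ fvTP t, θα x ≠ [])
    (hletters : ∀ x ∈ fvTP t, ∀ c ∈ θα x, c = a ∨ c = b)
    (hprefixcode : ∀ x ∈ fvTP t, ∀ y ∈ fvTP t, x ≠ y → ¬ (θα x <+: θα y))
    (hM : Models
      (t.map (fun p =>
        [substPatW θα p,
         substPatW (fun x => (θα x).map
           (fun c => if c = a then b else if c = b then a else c)) p]))
      2 t₁) :
    lang t ⊆ lang t₁ := by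
  classical
  set θβ : V → Word A :=
    fun x => (θα x).map (fun c => if c = a then b else if c = b then a else c) with hθβ
  have Hhead : ∀ x ∈ fvTP t, ∃ c d rα rβ, θα x = c :: rα ∧ θβ x = d :: rβ ∧ c ≠ d := by
    intro x hx
    obtain ⟨c, rα, hc⟩ : ∃ c rα, θα x = c :: rα := by
      cases hαx : θα x with
      | nil => exact absurd hαx (hnonempty x hx)
      | cons c r => exact ⟨c, r, rfl⟩
    refine ⟨c, if c = a then b else if c = b then a else c, rα,
      (θα x).tail.map (fun c => if c = a then b else if c = b then a else c), hc,
      by rw [hθβ]; simp [hc], ?_⟩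
    rcases hletters x hx c (by rw [hc]; exact List.mem_cons_self) with rfl | rfl
    · simp [hab, Ne.symm hab]
    · simp [hab, Ne.symm hab]
  have Hcode := hprefixcode
  obtain ⟨Θ, hm, hwf, happ⟩ := hM
  have happ' : t₁.map (fun q => [substPatW (Θ.rowSub 0) q, substPatW (Θ.rowSub 1) q])
      = t.map (fun p => [substPatW θα p, substPatW θβ p]) := by
    rw [← happ]
    simp [DSub.apply, hm, List.range_succ]
  have hlen : t₁.length = t.length := by
    have := congrArg List.length happ'
    simpa using this
  have hcomp : ∀ j (hj : j < t.length) (hj' : j < t₁.length),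
      substPatW (Θ.rowSub 0) (t₁[j]'hj') = substPatW θα (t[j]'hj) ∧
      substPatW (Θ.rowSub 1) (t₁[j]'hj') = substPatW θβ (t[j]'hj) := by
    intro j hj hj'
    have h1 := List.getElem_of_eq happ' (by simpa using hj')
    rw [List.getElem_map, List.getElem_map] at h1
    simp only [List.cons.injEq, and_true] at h1
    exact ⟨h1.1, h1.2⟩
  intro w hw
  obtain ⟨θ, rfl⟩ := hw
  have hInv : ∀ q ∈ t₁, ∃ w', Good (fvTP t) θα θβ θ
      (substPatW (Θ.rowSub 0) q) (substPatW (Θ.rowSub 1) q) w' := by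
    intro q hq
    obtain ⟨j, hj', hjq⟩ := List.getElem_of_mem hq
    have hj : j < t.length := hlen ▸ hj'
    obtain ⟨h0, h1⟩ := hcomp j hj hj'
    subst hjq
    rw [h0, h1]
    exact ⟨_, good_pat _ (fun y hy => List.mem_flatten.2 ⟨_, List.getElem_mem hj, hy⟩)⟩
  obtain ⟨ys, hnodup, hrtc⟩ := hsolv₁
  have hInvTriv := inv_rtc Hhead Hcode hrtc hInv
  have hfv : fvTP t₁ ⊆ {y | y ∈ ys} := (fv_rtc hrtc).trans (fv_triv ys)
  have hGoodVar : ∀ y ∈ fvTP t₁, ∃ w', Good (fvTP t) θα θβ θ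
      (Θ.rowSub 0 y) (Θ.rowSub 1 y) w' := by
    intro y hy
    have hmem : ([Sum.inr y] : Pat A V) ∈ (trivTP ys : TP A V) := by
      simp only [trivTP, List.mem_map]
      exact ⟨y, hfv hy, rfl⟩
    have := hInvTriv _ hmem
    simpa [substPatW] using this
  set θ₁ : V → Word A := fun y =>
    if h : ∃ w', Good (fvTP t) θα θβ θ (Θ.rowSub 0 y) (Θ.rowSub 1 y) w'
    then h.choose else [] with hθ₁def
  have hθ₁ : ∀ y ∈ fvTP t₁,
      Good (fvTP t) θα θβ θ (Θ.rowSub 0 y) (Θ.rowSub 1 y) (θ₁ y) := by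
    intro y hy
    have h := hGoodVar y hy
    rw [hθ₁def]
    simp only [dif_pos h]
    exact h.choose_spec
  refine ⟨θ₁, ?_⟩
  apply List.ext_getElem (by simpa using hlen.symm)
  intro j h₁ h₂
  have hj : j < t.length := by simpa using h₁
  have hj' : j < t₁.length := by simpa using h₂
  simp only [List.getElem_map]
  obtain ⟨h0, h1c⟩ := hcomp j hj hj'
  have G1 : Good (fvTP t) θα θβ θ (substPatW θα (t[j]'hj)) (substPatW θβ (t[j]'hj))
      (substPatW θ (t[j]'hj)) :=
    good_pat _ (fun y hy => List.mem_flatten.2 ⟨_, List.getElem_mem hj, hy⟩)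
  have G2 : Good (fvTP t) θα θβ θ (substPatW θα (t[j]'hj)) (substPatW θβ (t[j]'hj))
      (substPatW θ₁ (t₁[j]'hj')) := by
    rw [← h0, ← h1c]
    exact good_sub _ (fun y hy => hθ₁ y (List.mem_flatten.2 ⟨_, List.getElem_mem hj', hy⟩))
  exact Good.uniq Hhead Hcode G1 G2 rfl rfl

end STPaper
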